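/- arXiv:2509.10666 — 2 statements merged into one kernel-verified Lean document; each statement's English description precedes it below -/
import Mathlib

section
/- For all real β > 0 and M > 0, the second-order derivative of A(M) = M·(1 − e^{−β/M})/β with respect to M equals −(β/M³)·e^{−β/M}, and this second derivative is strictly negative; hence A is strictly concave on (0, ∞). -/
/-! Up to the factor `1/β`, the gain is `h(M) = M (1 - e^{-β/M})`. Differentiating twice,
`h' = 1 - e^{-β/M} - (β/M) e^{-β/M}` and in `h''` the terms `± (β/M²) e^{-β/M}` cancel, leaving
`-(β²/M³) e^{-β/M}`, which is negative for `M > 0`; strict concavity then follows from the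
second-derivative test. -/

open Real

theorem hasDerivAt_const_div {𝕜 : Type*} [NontriviallyNormedField 𝕜] (c : 𝕜) {x : 𝕜}
    (hx : x ≠ 0) : HasDerivAt (fun y => c / y) (-c / x ^ 2) x := by
  simpa using (hasDerivAt_const x c).fun_div (hasDerivAt_id' x) hx

theorem deriv_deriv_div_const {𝕜 : Type*} [NontriviallyNormedField 𝕜] (f : 𝕜 → 𝕜) (c x : 𝕜) :
    deriv (deriv fun y => f y / c) x = deriv (deriv f) x / c := by
  have hderiv : deriv (fun y => f y / c) = fun y => deriv f y / c :=
    funext fun y => deriv_div_const c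
  rw [hderiv, deriv_div_const]

section GainNumerator

variable (β : ℝ) {M : ℝ}

theorem hasDerivAt_exp_neg_div (hM : M ≠ 0) :
    HasDerivAt (fun x => exp (-β / x)) (β / M ^ 2 * exp (-β / M)) M := by
  simpa only [neg_neg, mul_comm] using (hasDerivAt_const_div (-β) hM).exp

theorem hasDerivAt_mul_one_sub_exp_neg_div (hM : M ≠ 0) :
    HasDerivAt (fun x => x * (1 - exp (-β / x)))
      (1 - exp (-β / M) - β / M * exp (-β / M)) M := by
  refine ((hasDerivAt_id' M).fun_mul ((hasDerivAt_const M 1).fun_sub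
    (hasDerivAt_exp_neg_div β hM))).congr_deriv ?_
  field_simp
  ring

theorem hasDerivAt_one_sub_exp_neg_div_sub (hM : M ≠ 0) :
    HasDerivAt (fun x => 1 - exp (-β / x) - β / x * exp (-β / x))
      (-(β ^ 2 / M ^ 3) * exp (-β / M)) M := by
  have hexp := hasDerivAt_exp_neg_div β hM
  refine (((hasDerivAt_const M 1).fun_sub hexp).fun_sub
    ((hasDerivAt_const_div β hM).fun_mul hexp)).congr_deriv ?_
  field_simp
  ring

theorem deriv_deriv_mul_one_sub_exp_neg_div (hM : M ≠ 0) :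
    deriv (deriv fun x => x * (1 - exp (-β / x))) M = -(β ^ 2 / M ^ 3) * exp (-β / M) := by
  have hderiv : deriv (fun x => x * (1 - exp (-β / x)))
      =ᶠ[nhds M] fun x => 1 - exp (-β / x) - β / x * exp (-β / x) := by
    filter_upwards [eventually_ne_nhds hM] with x hx
    exact (hasDerivAt_mul_one_sub_exp_neg_div β hx).deriv
  rw [hderiv.deriv_eq]
  exact (hasDerivAt_one_sub_exp_neg_div_sub β hM).deriv

end GainNumerator

/-- For all real β > 0 and M > 0, the second-order derivative of
A(M) = M·(1 − e^{−β/M})/β with respect to M equals −(β/M³)·e^{−β/M}, and this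
second derivative is strictly negative; hence A is strictly concave on (0, ∞). -/
theorem stmt_1 (β : ℝ) (hβ : 0 < β) :
    (∀ M : ℝ, 0 < M →
      deriv (deriv (fun M : ℝ => M * (1 - Real.exp (-β / M)) / β)) M
        = -(β / M ^ 3) * Real.exp (-β / M) ∧
      -(β / M ^ 3) * Real.exp (-β / M) < 0) ∧
    StrictConcaveOn ℝ (Set.Ioi (0 : ℝ))
      (fun M : ℝ => M * (1 - Real.exp (-β / M)) / β) := by
  have hsecond : ∀ M : ℝ, 0 < M →
      deriv (deriv (fun M : ℝ => M * (1 - exp (-β / M)) / β)) M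
        = -(β / M ^ 3) * exp (-β / M) := by
    intro M hM
    rw [deriv_deriv_div_const, deriv_deriv_mul_one_sub_exp_neg_div β hM.ne']
    field_simp
  have hneg : ∀ M : ℝ, 0 < M → -(β / M ^ 3) * exp (-β / M) < 0 := fun M hM =>
    mul_neg_of_neg_of_pos (neg_neg_of_pos (by positivity)) (exp_pos _)
  refine ⟨fun M hM => ⟨hsecond M hM, hneg M hM⟩, ?_⟩
  refine strictConcaveOn_of_deriv2_neg' (convex_Ioi 0) ?_ fun M hM => ?_
  · exact fun M hM => ((hasDerivAt_mul_one_sub_exp_neg_div β hM.ne').div_const β)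
      |>.continuousAt.continuousWithinAt
  · simpa only [Function.iterate_succ, Function.iterate_zero, Function.comp_apply, id_eq,
      hsecond M hM] using hneg M hM
end

section
/- Fix a real M > 1. The ratio R(β) = M·(1 − e^{−β/M})/(1 − e^{−β}) of the average in-waveguide propagation gain of the SS-based SWAN to that of the conventional single-waveguide PASS is strictly increasing in β on (0, ∞); equivalently, ∂/∂D_x (A_SS/A) > 0, so the gain improvement grows with the size of the service region. -/
open Real Set Filter

/-! With `u = exp (-β / M) ∈ (0, 1)` one has `exp (-β) = u ^ M`, so the ratio equals
`M / s u` where `s u = (u ^ M - 1) / (u - 1)` is the slope of the secant of `x ↦ x ^ M`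
through `1`. Since `x ↦ x ^ M` is strictly convex for `M > 1`, `s` is strictly increasing,
and since `u` is strictly decreasing in `β`, the ratio is strictly increasing. -/

theorem strictMonoOn_rpow_secant_one {p : ℝ} (hp : 1 < p) :
    StrictMonoOn (fun x : ℝ => (x ^ p - 1) / (x - 1)) (Ici 0 \ {1}) := by
  intro x hx y hy hxy
  simpa only [one_rpow] using
    (strictConvexOn_rpow hp).secant_strict_mono (a := 1) (mem_Ici.mpr zero_le_one) hx.1 hy.1 hx.2 hy.2 hxy

theorem rpow_secant_one_pos {p : ℝ} (hp : 0 < p) {x : ℝ} (hx₀ : 0 ≤ x) (hx₁ : x < 1) :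
    0 < (x ^ p - 1) / (x - 1) :=
  div_pos_of_neg_of_neg (by linarith [rpow_lt_one hx₀ hx₁ hp]) (by linarith)

/-- Fix a real M > 1. The ratio R(β) = M·(1 − e^{−β/M})/(1 − e^{−β})
of the average in-waveguide propagation gain of the SS-based SWAN to that of the
conventional single-waveguide PASS is strictly increasing in β on (0, ∞). -/
theorem stmt_4 (M : ℝ) (hM : 1 < M) :
    StrictMonoOn (fun β : ℝ => M * (1 - Real.exp (-β / M)) / (1 - Real.exp (-β)))
      (Set.Ioi (0 : ℝ)) := by
  have hM₀ : 0 < M := zero_lt_one.trans hM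
  set u : ℝ → ℝ := fun β => exp (-β / M) with hu
  have ratio_eq (β : ℝ) :
      M * (1 - exp (-β / M)) / (1 - exp (-β)) = M / ((u β ^ M - 1) / (u β - 1)) := by
    rw [div_div_eq_mul_div, hu, ← exp_mul, div_mul_cancel₀ _ hM₀.ne', ← neg_sub 1 (exp _),
      ← neg_sub 1 (exp (-β)), mul_neg, neg_div_neg_eq]
  have hu_lt_one {β : ℝ} (hβ : 0 < β) : u β < 1 :=
    exp_lt_one_iff.mpr (div_neg_of_neg_of_pos (neg_neg_of_pos hβ) hM₀)
  intro a ha b hb hab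
  have hu_lt : u b < u a := exp_lt_exp.mpr (by gcongr)
  simp only [ratio_eq]
  exact div_lt_div_of_pos_left hM₀ (rpow_secant_one_pos hM₀ (exp_pos _).le (hu_lt_one hb))
    (strictMonoOn_rpow_secant_one hM ⟨(exp_pos _).le, (hu_lt_one hb).ne⟩
      ⟨(exp_pos _).le, (hu_lt_one ha).ne⟩ hu_lt)
end
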